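/- arXiv:2206.02293 — 2 statements merged into one kernel-verified Lean document; each statement's English description precedes it below -/
import Mathlib

section
/- Let m ∈ (1/2)ℕ, s ∈ (1/2)ℤ and p ∈ ℤ, and let τ lie in the upper half-plane, z ∉ ℤτ + ℤ, t ∈ ℂ. Then (i) Φ^{[m,s]}(τ, z, −z+pτ, t) = 0 and Φ^{(−)[m,s]}(τ, z, −z+2pτ, t) = 0; equivalently, (ii) Φ^{[m,s]}_1(τ, z, −z+pτ, t) = Φ^{[m,s]}_2(τ, z, −z+pτ, t) and Φ^{(−)[m,s]}_1(τ, z, −z+2pτ, t) = Φ^{(−)[m,s]}_2(τ, z, −z+2pτ, t). -/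
noncomputable section

open scoped BigOperators

namespace Mock

/-- `e x = exp(2πix)` -/
def e (x : ℂ) : ℂ := Complex.exp (2 * (Real.pi : ℂ) * Complex.I * x)

/-- `qpow τ a = q^a = exp(2πiaτ)` for a real exponent `a` -/
def qpow (τ : ℂ) (a : ℝ) : ℂ := Complex.exp (2 * (Real.pi : ℂ) * Complex.I * (a : ℂ) * τ)

/-- Jacobi theta function `θ^{(ε)}_{k,m}(τ,z)` -/
def theta (ε : ℂ) (k m : ℝ) (τ z : ℂ) : ℂ :=
  ∑' j : ℤ, ε ^ j * e ((m : ℂ) * ((j : ℂ) + (k : ℂ) / (2 * (m : ℂ))) * z)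
      * qpow τ (m * ((j : ℝ) + k / (2 * m)) ^ 2)

/-- `Φ^{(ε)[m,s]}_1` -/
def Phi1 (ε : ℂ) (m s : ℝ) (τ z₁ z₂ t : ℂ) : ℂ :=
  e (-(m : ℂ) * t) * ∑' j : ℤ,
    ε ^ j * e ((m : ℂ) * (j : ℂ) * (z₁ + z₂) + (s : ℂ) * z₁)
      * qpow τ (m * (j : ℝ) ^ 2 + s * (j : ℝ)) / (1 - e z₁ * qpow τ (j : ℝ))

/-- `Φ^{(ε)[m,s]}_2` -/
def Phi2 (ε : ℂ) (m s : ℝ) (τ z₁ z₂ t : ℂ) : ℂ :=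
  e (-(m : ℂ) * t) * ∑' j : ℤ,
    ε ^ j * e (-(m : ℂ) * (j : ℂ) * (z₁ + z₂) - (s : ℂ) * z₂)
      * qpow τ (m * (j : ℝ) ^ 2 + s * (j : ℝ)) / (1 - e (-z₂) * qpow τ (j : ℝ))

/-- `Φ^{(ε)[m,s]} = Φ₁ - Φ₂` -/
def Phi (ε : ℂ) (m s : ℝ) (τ z₁ z₂ t : ℂ) : ℂ :=
  Phi1 ε m s τ z₁ z₂ t - Phi2 ε m s τ z₁ z₂ t

/-- `E(x) = 2∫₀ˣ e^{−πt²} dt` -/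
def Efun (x : ℝ) : ℝ := 2 * ∫ t in (0:ℝ)..x, Real.exp (-Real.pi * t ^ 2)

/-- `P^{(ε)}_{j,m}(τ,w)` -/
def Pfun (ε : ℂ) (j m : ℝ) (τ w : ℂ) : ℂ :=
  ∑' k : ℤ, ε ^ k *
    (Efun ((j + 2 * m * (k : ℝ) - 2 * m * (w.im / τ.im)) * Real.sqrt (τ.im / m)) : ℂ) *
    Complex.exp (-(Real.pi : ℂ) * Complex.I * τ * ((j : ℂ) + 2 * (m : ℂ) * (k : ℂ)) ^ 2 / (2 * (m : ℂ))
      + 2 * (Real.pi : ℂ) * Complex.I * ((j : ℂ) + 2 * (m : ℂ) * (k : ℂ)) * w)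

/-- `Q^{(ε)}_{j,m}(τ,w)` -/
def Qfun (ε : ℂ) (j m : ℝ) (τ w : ℂ) : ℂ :=
  ∑' k : ℤ, ε ^ k * (if 0 ≤ k then (1 : ℂ) else -1) *
    Complex.exp (-(Real.pi : ℂ) * Complex.I * τ * ((j : ℂ) + 2 * (m : ℂ) * (k : ℂ)) ^ 2 / (2 * (m : ℂ))
      + 2 * (Real.pi : ℂ) * Complex.I * ((j : ℂ) + 2 * (m : ℂ) * (k : ℂ)) * w)

/-- `R^{(ε)}_{j,m}(τ,w)`, the sum over `n = j + 2mk`, `k ∈ ℤ` -/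
def Rfun (ε : ℂ) (j m : ℝ) (τ w : ℂ) : ℂ :=
  ∑' k : ℤ, ε ^ k *
    ((Real.sign (2 * m * (k : ℝ) + 2 * m - 1 / 2) : ℂ)
      - (Efun ((j + 2 * m * (k : ℝ) - 2 * m * (w.im / τ.im)) * Real.sqrt (τ.im / m)) : ℂ)) *
    Complex.exp (-(Real.pi : ℂ) * Complex.I * τ * ((j : ℂ) + 2 * (m : ℂ) * (k : ℂ)) ^ 2 / (2 * (m : ℂ))
      + 2 * (Real.pi : ℂ) * Complex.I * ((j : ℂ) + 2 * (m : ℂ) * (k : ℂ)) * w)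

/-- correction term `Φ^{(ε)[m,s]}_{add}`; the finite sum over `k ∈ s+ℤ`, `s ≤ k < s+2m`
is parametrized by `k = s + n`, `0 ≤ n < 2m`. -/
def PhiAdd (ε : ℂ) (m s : ℝ) (τ z₁ z₂ t : ℂ) : ℂ :=
  -(1/2) * e (-(m : ℂ) * t) *
    ∑' n : ℤ, if 0 ≤ n ∧ (n : ℝ) < 2 * m then
      Rfun ε (s + (n : ℝ)) m τ ((z₁ - z₂) / 2) *
        (theta ε (s + (n : ℝ)) m τ (z₁ + z₂) - theta ε (-(s + (n : ℝ))) m τ (z₁ + z₂))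
    else 0

/-- Zwegers modification `Φ̃^{(ε)[m,s]}` -/
def PhiTilde (ε : ℂ) (m s : ℝ) (τ z₁ z₂ t : ℂ) : ℂ :=
  Phi ε m s τ z₁ z₂ t + PhiAdd ε m s τ z₁ z₂ t

/-- Dedekind eta function -/
def eta (τ : ℂ) : ℂ := qpow τ (1/24) * ∏' n : ℕ, (1 - qpow τ ((n : ℝ) + 1))

/-- Mumford theta `ϑ₁₁(τ,z) = i θ^{(−)}_{1/2,1/2}(τ,2z)` -/
def vtheta11 (τ z : ℂ) : ℂ := Complex.I * theta (-1) (1/2) (1/2) τ (2 * z)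

/-- Mumford theta `ϑ₁₀(τ,z) = θ^{(+)}_{1/2,1/2}(τ,2z)` -/
def vtheta10 (τ z : ℂ) : ℂ := theta 1 (1/2) (1/2) τ (2 * z)

/-- the half-odd integer `(2n+1)/2` -/
def hodd (n : ℕ) : ℝ := (2 * (n : ℝ) + 1) / 2

def psi1 (m : ℝ) (τ z : ℂ) : ℂ :=
  PhiTilde (-1) m (1/2) τ (z/2 + τ/2 - 1/2) (z/2 - τ/2 + 1/2) 0
def psi2 (m : ℝ) (τ z : ℂ) : ℂ :=
  PhiTilde (-1) m (1/2) τ (z/2 + τ/2) (z/2 - τ/2) 0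
def psi3 (m : ℝ) (τ z : ℂ) : ℂ :=
  PhiTilde (-1) m (1/2) τ (z/2 - 1/2) (z/2 + 1/2) 0

def Xi1 (m : ℝ) (p : ℤ) (τ z : ℂ) : ℂ :=
  qpow τ (-m/4) * theta (-1) ((2 * (p : ℝ) + 1) * m) (m + 1/2) τ 0 * psi1 m τ z
def Xi2 (m : ℝ) (p : ℤ) (τ z : ℂ) : ℂ :=
  qpow τ (-m/4) * theta 1 ((2 * (p : ℝ) + 1) * m) (m + 1/2) τ 0 * psi2 m τ z
def Xi3 (m : ℝ) (p : ℤ) (τ z : ℂ) : ℂ :=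
  theta (-1) (2 * (p : ℝ) * m) (m + 1/2) τ 0 * psi3 m τ z

def Ups1 (m : ℝ) (p : ℤ) (τ z : ℂ) : ℂ :=
  -Complex.I * eta τ ^ 3 *
    (theta (-1) ((p : ℝ) + 1/2) (m + 1/2) τ z - theta (-1) (-((p : ℝ) + 1/2)) (m + 1/2) τ z) /
    theta 1 0 (1/2) τ z
def Ups2 (m : ℝ) (p : ℤ) (τ z : ℂ) : ℂ :=
  eta τ ^ 3 *
    (theta 1 ((p : ℝ) + 1/2) (m + 1/2) τ z - theta 1 (-((p : ℝ) + 1/2)) (m + 1/2) τ z) /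
    theta (-1) 0 (1/2) τ z
def Ups3 (m : ℝ) (p : ℤ) (τ z : ℂ) : ℂ :=
  -Complex.I * eta τ ^ 3 *
    (theta (-1) (p : ℝ) (m + 1/2) τ z - theta (-1) (-(p : ℝ)) (m + 1/2) τ z) /
    theta 1 (1/2) (1/2) τ z

def G1 (m : ℝ) (p : ℤ) (τ z : ℂ) : ℂ := Xi1 m p τ z - Ups1 m p τ z
def G2 (m : ℝ) (p : ℤ) (τ z : ℂ) : ℂ := Xi2 m p τ z - Ups2 m p τ z
def G3 (m : ℝ) (p : ℤ) (τ z : ℂ) : ℂ := Xi3 m p τ z - Ups3 m p τ z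

/-- `ω^{[m]}_{j,k}(z₁,z₂,z₃)` -/
def omega (m : ℝ) (j k : ℕ) (z₁ z₂ z₃ : ℂ) : ℂ :=
  e ((j : ℂ) * (z₁ - z₂)) * e ((2 * (m : ℂ) * (j : ℂ) - (k : ℂ)) * (z₁ - 2 * z₂ - z₃) / 2)
  + e (-(j : ℂ) * (z₁ - z₂)) * e (-(2 * (m : ℂ) * (j : ℂ) - (k : ℂ)) * (z₁ - 2 * z₂ - z₃) / 2)
  - e ((j : ℂ) * (z₁ - z₂)) * e ((2 * (m : ℂ) * (j : ℂ) - (k : ℂ)) * (z₁ + z₃) / 2)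
  - e (-(j : ℂ) * (z₁ - z₂)) * e (-(2 * (m : ℂ) * (j : ℂ) - (k : ℂ)) * (z₁ + z₃) / 2)

/-- indefinite modular form `g^{(1)[m,p]}_k(τ)` (with the convention of the paper,
split according to `k = m` or `k < m`). -/
def g1 (m : ℝ) (p : ℤ) (k : ℝ) (τ : ℂ) : ℂ :=
  if k = m then
    ((∑' x : ℤ × ℤ, if 0 < x.2 ∧ x.2 ≤ x.1 then
        (-1 : ℂ) ^ x.1 * e ((m : ℂ) / 2) *
          qpow τ ((m + 1/2) * ((x.1 : ℝ) + m * (2 * (p : ℝ) + 1) / (2 * m + 1)) ^ 2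
            - m * ((x.2 : ℝ) + (p : ℝ)) ^ 2) else 0)
      - (∑' x : ℤ × ℤ, if x.1 < x.2 ∧ x.2 ≤ 0 then
        (-1 : ℂ) ^ x.1 * e ((m : ℂ) / 2) *
          qpow τ ((m + 1/2) * ((x.1 : ℝ) + m * (2 * (p : ℝ) + 1) / (2 * m + 1)) ^ 2
            - m * ((x.2 : ℝ) + (p : ℝ)) ^ 2) else 0))
    + (1/2) * e ((m : ℂ) / 2) * theta (-1) ((2 * (p : ℝ) + 1) * m) (m + 1/2) τ 0 *
        ∑ r ∈ Finset.Icc (-p) p, qpow τ (-m * (r : ℝ) ^ 2)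
  else
    ((∑' x : ℤ × ℤ, if 0 ≤ x.2 ∧ x.2 < x.1 then
        (-1 : ℂ) ^ x.1 * e ((k : ℂ) / 2) *
          qpow τ ((m + 1/2) * ((x.1 : ℝ) + m * (2 * (p : ℝ) + 1) / (2 * m + 1)) ^ 2
            - m * ((x.2 : ℝ) + (p : ℝ) + (m + k) / (2 * m)) ^ 2) else 0)
      - (∑' x : ℤ × ℤ, if x.1 ≤ x.2 ∧ x.2 < 0 then
        (-1 : ℂ) ^ x.1 * e ((k : ℂ) / 2) *
          qpow τ ((m + 1/2) * ((x.1 : ℝ) + m * (2 * (p : ℝ) + 1) / (2 * m + 1)) ^ 2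
            - m * ((x.2 : ℝ) + (p : ℝ) + (m + k) / (2 * m)) ^ 2) else 0))
    + ((∑' x : ℤ × ℤ, if 0 ≤ x.2 ∧ x.2 ≤ x.1 then
        (-1 : ℂ) ^ x.1 * e ((k : ℂ) / 2) *
          qpow τ ((m + 1/2) * ((x.1 : ℝ) + m * (2 * (p : ℝ) + 1) / (2 * m + 1)) ^ 2
            - m * ((x.2 : ℝ) + (p : ℝ) + (m - k) / (2 * m)) ^ 2) else 0)
      - (∑' x : ℤ × ℤ, if x.1 < x.2 ∧ x.2 < 0 then
        (-1 : ℂ) ^ x.1 * e ((k : ℂ) / 2) *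
          qpow τ ((m + 1/2) * ((x.1 : ℝ) + m * (2 * (p : ℝ) + 1) / (2 * m + 1)) ^ 2
            - m * ((x.2 : ℝ) + (p : ℝ) + (m - k) / (2 * m)) ^ 2) else 0))
    + e ((k : ℂ) / 2) * theta (-1) ((2 * (p : ℝ) + 1) * m) (m + 1/2) τ 0 *
        ∑ r ∈ Finset.Icc (-p + 1) p, qpow τ (-m * ((r : ℝ) + (k - m) / (2 * m)) ^ 2)

/-- indefinite modular form `g^{(2)[m,p]}_k(τ)` -/
def g2 (m : ℝ) (p : ℤ) (k : ℝ) (τ : ℂ) : ℂ :=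
  if k = m then
    -(-1 : ℂ) ^ p *
      ((∑' x : ℤ × ℤ, if 0 < x.2 ∧ x.2 ≤ x.1 then
          (-1 : ℂ) ^ x.2 *
            qpow τ ((m + 1/2) * ((x.1 : ℝ) + m * (2 * (p : ℝ) + 1) / (2 * m + 1)) ^ 2
              - m * ((x.2 : ℝ) + (p : ℝ)) ^ 2) else 0)
        - (∑' x : ℤ × ℤ, if x.1 < x.2 ∧ x.2 ≤ 0 then
          (-1 : ℂ) ^ x.2 *
            qpow τ ((m + 1/2) * ((x.1 : ℝ) + m * (2 * (p : ℝ) + 1) / (2 * m + 1)) ^ 2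
              - m * ((x.2 : ℝ) + (p : ℝ)) ^ 2) else 0))
    - (1/2) * theta 1 ((2 * (p : ℝ) + 1) * m) (m + 1/2) τ 0 *
        ∑ r ∈ Finset.Icc (-p) p, (-1 : ℂ) ^ r * qpow τ (-m * (r : ℝ) ^ 2)
  else
    (-1 : ℂ) ^ p *
      ((∑' x : ℤ × ℤ, if 0 ≤ x.2 ∧ x.2 < x.1 then
          (-1 : ℂ) ^ x.2 *
            qpow τ ((m + 1/2) * ((x.1 : ℝ) + m * (2 * (p : ℝ) + 1) / (2 * m + 1)) ^ 2
              - m * ((x.2 : ℝ) + (p : ℝ) + (m + k) / (2 * m)) ^ 2) else 0)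
        - (∑' x : ℤ × ℤ, if x.1 ≤ x.2 ∧ x.2 < 0 then
          (-1 : ℂ) ^ x.2 *
            qpow τ ((m + 1/2) * ((x.1 : ℝ) + m * (2 * (p : ℝ) + 1) / (2 * m + 1)) ^ 2
              - m * ((x.2 : ℝ) + (p : ℝ) + (m + k) / (2 * m)) ^ 2) else 0))
    - (-1 : ℂ) ^ p *
      ((∑' x : ℤ × ℤ, if 0 ≤ x.2 ∧ x.2 ≤ x.1 then
          (-1 : ℂ) ^ x.2 *
            qpow τ ((m + 1/2) * ((x.1 : ℝ) + m * (2 * (p : ℝ) + 1) / (2 * m + 1)) ^ 2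
              - m * ((x.2 : ℝ) + (p : ℝ) + (m - k) / (2 * m)) ^ 2) else 0)
        - (∑' x : ℤ × ℤ, if x.1 < x.2 ∧ x.2 < 0 then
          (-1 : ℂ) ^ x.2 *
            qpow τ ((m + 1/2) * ((x.1 : ℝ) + m * (2 * (p : ℝ) + 1) / (2 * m + 1)) ^ 2
              - m * ((x.2 : ℝ) + (p : ℝ) + (m - k) / (2 * m)) ^ 2) else 0))
    - theta 1 ((2 * (p : ℝ) + 1) * m) (m + 1/2) τ 0 *
        ∑ r ∈ Finset.Icc (-p + 1) p, (-1 : ℂ) ^ r *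
          qpow τ (-m * ((r : ℝ) + (k - m) / (2 * m)) ^ 2)

/-- indefinite modular form `g^{(3)[m,p]}_k(τ)` -/
def g3 (m : ℝ) (p : ℤ) (k : ℝ) (τ : ℂ) : ℂ :=
  if k = m then
    e ((m : ℂ) / 2) *
      ((∑' x : ℤ × ℤ, if 0 < x.2 ∧ x.2 ≤ x.1 then
          (-1 : ℂ) ^ x.1 *
            qpow τ ((m + 1/2) * ((x.1 : ℝ) + 2 * m * (p : ℝ) / (2 * m + 1)) ^ 2
              - m * ((x.2 : ℝ) - 1/2 + (p : ℝ)) ^ 2) else 0)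
        - (∑' x : ℤ × ℤ, if x.1 < x.2 ∧ x.2 ≤ 0 then
          (-1 : ℂ) ^ x.1 *
            qpow τ ((m + 1/2) * ((x.1 : ℝ) + 2 * m * (p : ℝ) / (2 * m + 1)) ^ 2
              - m * ((x.2 : ℝ) - 1/2 + (p : ℝ)) ^ 2) else 0))
    + e ((m : ℂ) / 2) * theta (-1) (2 * (p : ℝ) * m) (m + 1/2) τ 0 *
        ∑ r ∈ Finset.Icc 1 p, qpow τ (-m * (2 * (r : ℝ) - 1) ^ 2 / 4)
  else
    ((∑' x : ℤ × ℤ, if 0 ≤ x.2 ∧ x.2 < x.1 then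
        (-1 : ℂ) ^ x.1 * e ((k : ℂ) / 2) *
          qpow τ ((m + 1/2) * ((x.1 : ℝ) + 2 * m * (p : ℝ) / (2 * m + 1)) ^ 2
            - m * ((x.2 : ℝ) + (p : ℝ) + k / (2 * m)) ^ 2) else 0)
      - (∑' x : ℤ × ℤ, if x.1 ≤ x.2 ∧ x.2 < 0 then
        (-1 : ℂ) ^ x.1 * e ((k : ℂ) / 2) *
          qpow τ ((m + 1/2) * ((x.1 : ℝ) + 2 * m * (p : ℝ) / (2 * m + 1)) ^ 2
            - m * ((x.2 : ℝ) + (p : ℝ) + k / (2 * m)) ^ 2) else 0))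
    + ((∑' x : ℤ × ℤ, if 0 ≤ x.2 ∧ x.2 ≤ x.1 then
        (-1 : ℂ) ^ x.1 * e ((k : ℂ) / 2) *
          qpow τ ((m + 1/2) * ((x.1 : ℝ) + 2 * m * (p : ℝ) / (2 * m + 1)) ^ 2
            - m * ((x.2 : ℝ) + (p : ℝ) - k / (2 * m)) ^ 2) else 0)
      - (∑' x : ℤ × ℤ, if x.1 < x.2 ∧ x.2 < 0 then
        (-1 : ℂ) ^ x.1 * e ((k : ℂ) / 2) *
          qpow τ ((m + 1/2) * ((x.1 : ℝ) + 2 * m * (p : ℝ) / (2 * m + 1)) ^ 2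
            - m * ((x.2 : ℝ) + (p : ℝ) - k / (2 * m)) ^ 2) else 0))
    + e ((k : ℂ) / 2) * theta (-1) (2 * (p : ℝ) * m) (m + 1/2) τ 0 *
        ∑ r ∈ Finset.Icc (-p + 1) (p - 1), qpow τ (-(2 * m * (r : ℝ) + k) ^ 2 / (4 * m))

theorem e_mul_qpow (x : ℂ) (a : ℝ) (τ : ℂ) : e x * qpow τ a = e (x + a * τ) := by
  unfold e qpow
  rw [← Complex.exp_add]
  ring_nf

theorem zpow_add_eq_self_of_zpow_eq_one {ε : ℂ} {c : ℤ} (hε : ε ^ c = 1) (j : ℤ) :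
    ε ^ (j + c) = ε ^ j := by
  rcases eq_or_ne ε 0 with rfl | hε0
  · obtain rfl : c = 0 := by
      by_contra hc
      simp [zero_zpow c hc] at hε
    simp
  · rw [zpow_add₀ hε0, hε, mul_one]

/-- The substitution `j ↦ j + c` turns the series of `Φ₂` into that of `Φ₁` term by term. -/
theorem Phi1_eq_Phi2_of_zpow_eq_one {ε : ℂ} {c : ℤ} (hε : ε ^ c = 1) (m s : ℝ) (τ z t : ℂ) :
    Phi1 ε m s τ z (-z + c * τ) t = Phi2 ε m s τ z (-z + c * τ) t := by
  unfold Phi1 Phi2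
  congr 1
  symm
  rw [← (Equiv.addRight c).tsum_eq]
  refine tsum_congr fun j => ?_
  have hden : e (-(-z + c * τ)) * qpow τ ((j + c : ℤ) : ℝ) = e z * qpow τ j := by
    rw [e_mul_qpow, e_mul_qpow]
    push_cast
    ring_nf
  have hnum : e (-m * ((j + c : ℤ) : ℂ) * (z + (-z + c * τ)) - s * (-z + c * τ))
        * qpow τ (m * ((j + c : ℤ) : ℝ) ^ 2 + s * ((j + c : ℤ) : ℝ))
      = e (m * j * (z + (-z + c * τ)) + s * z) * qpow τ (m * j ^ 2 + s * j) := by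
    rw [e_mul_qpow, e_mul_qpow]
    push_cast
    ring_nf
  rw [Equiv.coe_addRight, zpow_add_eq_self_of_zpow_eq_one hε, mul_assoc (ε ^ j), hnum, hden,
    ← mul_assoc]

theorem statement2_general (m s : ℝ) (p : ℤ)
    (τ : ℂ) (z t : ℂ) :
    Phi 1 m s τ z (-z + (p : ℂ) * τ) t = 0 ∧
    Phi (-1) m s τ z (-z + 2 * (p : ℂ) * τ) t = 0 ∧
    Phi1 1 m s τ z (-z + (p : ℂ) * τ) t = Phi2 1 m s τ z (-z + (p : ℂ) * τ) t ∧
    Phi1 (-1) m s τ z (-z + 2 * (p : ℂ) * τ) t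
      = Phi2 (-1) m s τ z (-z + 2 * (p : ℂ) * τ) t := by
  have hplus := Phi1_eq_Phi2_of_zpow_eq_one (one_zpow p) m s τ z t
  have hminus : Phi1 (-1) m s τ z (-z + 2 * (p : ℂ) * τ) t
      = Phi2 (-1) m s τ z (-z + 2 * (p : ℂ) * τ) t := by
    have h := Phi1_eq_Phi2_of_zpow_eq_one (c := 2 * p) (ε := -1) (by rw [zpow_mul]; norm_num)
      m s τ z t
    exact_mod_cast h
  exact ⟨sub_eq_zero.mpr hplus, sub_eq_zero.mpr hminus, hplus, hminus⟩

theorem statement2 (m s : ℝ) (hm : ∃ n : ℕ, 0 < n ∧ m = (n : ℝ) / 2)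
    (hs : ∃ n : ℤ, s = (n : ℝ) / 2) (p : ℤ)
    (τ : ℂ) (hτ : 0 < τ.im) (z t : ℂ)
    (hz : ∀ a b : ℤ, z ≠ (a : ℂ) * τ + (b : ℂ)) :
    Phi 1 m s τ z (-z + (p : ℂ) * τ) t = 0 ∧
    Phi (-1) m s τ z (-z + 2 * (p : ℂ) * τ) t = 0 ∧
    Phi1 1 m s τ z (-z + (p : ℂ) * τ) t = Phi2 1 m s τ z (-z + (p : ℂ) * τ) t ∧
    Phi1 (-1) m s τ z (-z + 2 * (p : ℂ) * τ) t
      = Phi2 (-1) m s τ z (-z + 2 * (p : ℂ) * τ) t :=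
  statement2_general m s p τ z t

end Mock
end
end

section
/- Let m ∈ (1/2)ℕ and let τ lie in the upper half-plane; let z₁, z₂, z₃ ∈ ℂ be such that all occurring series converge (e.g. z₁, z₂, z₃, −z₃+2jτ, z₁−z₂−z₃+2jτ ∉ ℤτ+ℤ for all j ∈ ℤ). Then Σ_{j∈ℤ} (−1)^j q^{(m+1)j²} e^{−2πij(z₁−z₂)+2πijm(z₁−z₃)} Φ^{(−)[m,0]}(τ, z₁, −z₃+2jτ, 0) − Σ_{j∈ℤ} (−1)^j q^{(m+1)j²} e^{2πij(z₁−z₂)+2πijm(z₁−z₃)} Φ^{(−)[m,0]}(τ, z₂, z₁−z₂−z₃+2jτ, 0) = Σ_{j∈ℤ} (−1)^j q^{(m+1)j²} e^{2πij(z₁−z₂)−2πijm(z₁−z₃)} Φ^{[1,0]}(τ, z₁, −z₂+2jτ, 0) − Σ_{j∈ℤ} (−1)^j q^{(m+1)j²} e^{2πij(z₁−z₂)+2πijm(z₁−z₃)} Φ^{[1,0]}(τ, z₃, z₁−z₂−z₃+2jτ, 0). -/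
noncomputable section

open scoped BigOperators

namespace Mock

/-!
Expanding `Φ` into its defining series turns each of the four `j`-series into a difference of
two absolutely convergent double series over `ℤ²` of terms
`(-1)^(j+gk) e(uj + vk) q^Q(j,k) / (1 - e(w) q^k)`. After the substitution `k ↦ k - 2j` in the
`Φ₂`-part, the four series on the left carry the form `Q = (m+1)j² + 2mjk + mk²` and the four on
the right the form `(m+1)j² + 2jk + k²`. The shear `(j, k) ↦ (-j - k, k)` maps the first form to
the second and identifies the left-hand double series one by one with the right-hand ones.
-/

open Filter Real

lemma e_add (x y : ℂ) : e (x + y) = e x * e y := by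
  simp only [e, mul_add, Complex.exp_add]

lemma e_zero : e 0 = 1 := by simp [e]

lemma qpow_eq_e (τ : ℂ) (a : ℝ) : qpow τ a = e (a * τ) := by
  simp only [qpow, e, mul_assoc]

lemma norm_e (x : ℂ) : ‖e x‖ = Real.exp (-(2 * π * x.im)) := by
  simp [e, Complex.norm_exp, Complex.mul_re]

lemma e_eq_one_iff (x : ℂ) : e x = 1 ↔ ∃ n : ℤ, x = n := by
  have h : (2 * π * Complex.I : ℂ) ≠ 0 := by simp [Real.pi_ne_zero]
  simp only [e, Complex.exp_eq_one_iff]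
  exact exists_congr fun n => ⟨fun hn => mul_left_cancel₀ h (by rw [hn]; ring),
    fun hn => by rw [hn]; ring⟩

lemma neg_one_zpow_add_two_mul (a b : ℤ) : (-1 : ℂ) ^ (a + 2 * b) = (-1) ^ a := by
  rw [zpow_add₀ (by norm_num), zpow_mul]
  norm_num

lemma exists_pos_forall_le_of_eventually_cofinite {α : Type*} {f : α → ℝ} (hf : ∀ a, 0 < f a)
    {c : ℝ} (hc : 0 < c) (hev : ∀ᶠ a in cofinite, c ≤ f a) : ∃ δ > 0, ∀ a, δ ≤ f a := by
  obtain ⟨B, hB⟩ := (isBoundedUnder_of_eventually_le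
    (hev.mono fun a ha => inv_anti₀ hc ha)).bddAbove_range_of_cofinite
  refine ⟨(max B 1)⁻¹, by positivity, fun a => ?_⟩
  rw [inv_le_comm₀ (by positivity) (hf a)]
  exact (hB (Set.mem_range_self a)).trans (le_max_left _ _)

lemma exists_pos_le_norm_one_sub_e_mul_qpow {τ w : ℂ} (hτ : 0 < τ.im)
    (hw : ∀ a b : ℤ, w ≠ a * τ + b) : ∃ δ > 0, ∀ n : ℤ, δ ≤ ‖1 - e w * qpow τ n‖ := by
  have hX (n : ℤ) : e w * qpow τ n = e (w + n * τ) := by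
    rw [qpow_eq_e, e_add, Complex.ofReal_intCast]
  refine exists_pos_forall_le_of_eventually_cofinite (fun n => ?_) one_half_pos ?_
  · rw [norm_pos_iff, sub_ne_zero, ne_comm, hX, Ne, e_eq_one_iff]
    rintro ⟨k, hk⟩
    exact hw (-n) k (by push_cast; linear_combination hk)
  set t : ℤ → ℝ := fun n => 2 * π * w.im + n * (2 * π * τ.im)
  have hnorm (n : ℤ) : ‖e w * qpow τ n‖ = Real.exp (-t n) := by
    simp only [hX, norm_e, t, Complex.add_im, Complex.mul_im, Complex.intCast_re,
      Complex.intCast_im, zero_mul, add_zero]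
    ring_nf
  have hslope : 0 < 2 * π * τ.im := by positivity
  rw [Int.cofinite_eq, eventually_sup]
  constructor
  · have ht : Tendsto t atBot atBot := tendsto_atBot_add_const_left _ _
      ((tendsto_intCast_atBot_iff.2 tendsto_id).atBot_mul_const hslope)
    filter_upwards [(tendsto_exp_atTop.comp (tendsto_neg_atBot_atTop.comp ht)).eventually_ge_atTop
      (3 / 2)] with n hn
    have := norm_sub_norm_le (e w * qpow τ n) 1
    rw [norm_sub_rev, norm_one, hnorm] at this
    simp only [Function.comp_apply] at hn
    linarith
  · have ht : Tendsto t atTop atTop := tendsto_atTop_add_const_left _ _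
      (tendsto_intCast_atTop_atTop.atTop_mul_const hslope)
    filter_upwards [(tendsto_exp_atBot.comp (tendsto_neg_atTop_atBot.comp ht)).eventually_le_const
      one_half_pos] with n hn
    have := norm_sub_norm_le 1 (e w * qpow τ n)
    rw [norm_one, hnorm] at this
    simp only [Function.comp_apply] at hn
    linarith

lemma quadratic_ge_mul_sq_add_sq {a b c : ℝ} (ha : 0 < a) (hdisc : b ^ 2 < a * c) (x y : ℝ) :
    (a * c - b ^ 2) / (a + c) * (x ^ 2 + y ^ 2) ≤ a * x ^ 2 + 2 * b * x * y + c * y ^ 2 := by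
  have hac : 0 < a + c := by nlinarith [sq_nonneg b]
  have hεa : (a * c - b ^ 2) / (a + c) < a := by rw [div_lt_iff₀ hac]; nlinarith [sq_nonneg b]
  have hε : (a * c - b ^ 2) / (a + c) * (a + c) = a * c - b ^ 2 := div_mul_cancel₀ _ hac.ne'
  generalize (a * c - b ^ 2) / (a + c) = ε at hε hεa ⊢
  -- `(a - ε) (c - ε) - b ^ 2 = ε ^ 2`, so the form shifted by `ε` is still positive semidefinite
  have key : (a - ε) * (a * x ^ 2 + 2 * b * x * y + c * y ^ 2 - ε * (x ^ 2 + y ^ 2))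
      = ((a - ε) * x + b * y) ^ 2 + (ε * y) ^ 2 := by linear_combination -y ^ 2 * hε
  nlinarith [sq_nonneg ((a - ε) * x + b * y), sq_nonneg (ε * y)]

def appellTerm (τ : ℂ) (a b c : ℝ) (g : ℤ) (u v w : ℂ) (p : ℤ × ℤ) : ℂ :=
  (-1) ^ (p.1 + g * p.2)
    * e (u * p.1 + v * p.2 + (a * p.1 ^ 2 + 2 * b * p.1 * p.2 + c * p.2 ^ 2 : ℝ) * τ)
    / (1 - e (w + p.2 * τ))

lemma summable_appellTerm {τ : ℂ} {a b c : ℝ} (g : ℤ) (u v : ℂ) {w : ℂ} (hτ : 0 < τ.im)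
    (ha : 0 < a) (hdisc : b ^ 2 < a * c) (hw : ∀ A B : ℤ, w ≠ A * τ + B) :
    Summable (appellTerm τ a b c g u v w) := by
  obtain ⟨δ, hδ, hden⟩ := exists_pos_le_norm_one_sub_e_mul_qpow hτ hw
  set ε := (a * c - b ^ 2) / (a + c)
  have hε : 0 < ε := div_pos (by linarith) (by nlinarith [sq_nonneg b])
  set τ' : ℂ := (2 * ε * τ.im : ℝ) * Complex.I
  have hτ' : τ'.im = 2 * ε * τ.im := by simp [τ']
  have hθ (z : ℂ) : Summable fun n : ℤ => ‖jacobiTheta₂_term n z τ'‖ :=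
    ((summable_jacobiTheta₂_term_iff z τ').2 (by rw [hτ']; positivity)).norm
  refine (((hθ u).mul_norm (hθ v)).mul_left δ⁻¹).of_norm_bounded fun ⟨j, k⟩ => ?_
  have hk := hden k
  rw [qpow_eq_e, ← e_add, Complex.ofReal_intCast] at hk
  rw [appellTerm, norm_div, norm_mul, norm_zpow, norm_neg, norm_one, one_zpow, one_mul,
    norm_e, norm_mul, norm_jacobiTheta₂_term, norm_jacobiTheta₂_term, ← Real.exp_add,
    div_eq_inv_mul]
  refine mul_le_mul (inv_anti₀ hδ hk) (Real.exp_le_exp.2 ?_) (by positivity) (by positivity)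
  have hQ := mul_le_mul_of_nonneg_left (quadratic_ge_mul_sq_add_sq ha hdisc j k)
    (by positivity : (0 : ℝ) ≤ 2 * π * τ.im)
  simp only [Complex.add_im, Complex.mul_im, Complex.intCast_re, Complex.intCast_im,
    Complex.ofReal_re, Complex.ofReal_im, hτ']
  linarith [hQ]

lemma tsum_mul_Phi_eq_tsum_appellTerm_sub {τ x y u ε : ℂ} {m M : ℝ} {g : ℤ} {f : ℤ → ℂ}
    (hτ : 0 < τ.im) (hM : 0 < M) (hMm : M < m + 1) (hε : ε = (-1) ^ g)
    (hx : ∀ A B : ℤ, x ≠ A * τ + B) (hy : ∀ A B : ℤ, -y ≠ A * τ + B)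
    (hf : ∀ j : ℤ, f j = u * j) :
    ∑' j : ℤ, (-1) ^ j * qpow τ ((m + 1) * (j : ℝ) ^ 2) * e (f j) * Phi ε M 0 τ x (y + 2 * j * τ) 0
      = ∑' p, appellTerm τ (m + 1) M M g u (M * (x + y)) x p
        - ∑' p, appellTerm τ (m + 1) M M g (u - 2 * (M * (x + y))) (-(M * (x + y))) (-y) p := by
  have hdisc : M ^ 2 < (m + 1) * M := by nlinarith
  have h₁ := summable_appellTerm g u (M * (x + y)) hτ (by linarith) hdisc hx
  have h₂ := summable_appellTerm g (u - 2 * (M * (x + y))) (-(M * (x + y))) hτ (by linarith)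
    hdisc hy
  have hmerge (s₁ s₂ A B C D w W : ℂ) : s₁ * e A * e B * (s₂ * e C * e D / (1 - e w * e W))
      = s₁ * s₂ * e (A + B + C + D) / (1 - e (w + W)) := by
    simp only [e_add]; ring
  have hrow (j : ℤ) : (-1) ^ j * qpow τ ((m + 1) * (j : ℝ) ^ 2) * e (f j)
      * Phi ε M 0 τ x (y + 2 * j * τ) 0
      = ∑' k, appellTerm τ (m + 1) M M g u (M * (x + y)) x (j, k)
        - ∑' k, appellTerm τ (m + 1) M M g (u - 2 * (M * (x + y))) (-(M * (x + y))) (-y) (j, k) := by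
    simp only [Phi, Phi1, Phi2, mul_zero, e_zero, one_mul, Complex.ofReal_zero, zero_mul,
      add_zero, sub_zero, qpow_eq_e]
    rw [mul_sub, ← tsum_mul_left, ← tsum_mul_left]
    congr 1
    · refine tsum_congr fun k => ?_
      rw [hmerge, appellTerm, hf, hε, ← zpow_mul, ← zpow_add₀ (by norm_num)]
      congr 3
      push_cast
      ring
    · conv_rhs => rw [← (Equiv.subRight (2 * j)).tsum_eq]
      refine tsum_congr fun k => ?_
      rw [hmerge, appellTerm, Equiv.subRight_apply, hf, hε, ← zpow_mul, ← zpow_add₀ (by norm_num),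
        show j + g * (k - 2 * j) = j + g * k + 2 * -(g * j) by ring, neg_one_zpow_add_two_mul]
      congr 3 <;> push_cast <;> ring
  rw [tsum_congr hrow, Summable.tsum_sub h₁.prod h₂.prod, h₁.tsum_prod' h₁.prod_factor,
    h₂.tsum_prod' h₂.prod_factor]

lemma tsum_appellTerm_shear (τ : ℂ) (a b c : ℝ) (g : ℤ) (u v w : ℂ) :
    ∑' p, appellTerm τ a b c g u v w p
      = ∑' p, appellTerm τ a (a - b) (a - 2 * b + c) (1 - g) (-u) (v - u) w p := by
  let σ : ℤ × ℤ ≃ ℤ × ℤ :=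
    ⟨fun p => (-p.1 - p.2, p.2), fun p => (-p.1 - p.2, p.2), fun _ => by simp, fun _ => by simp⟩
  rw [← σ.tsum_eq]
  refine tsum_congr fun ⟨j, k⟩ => ?_
  simp only [appellTerm, σ, Equiv.coe_fn_mk]
  rw [show -j - k + g * k = j + (1 - g) * k + 2 * (-j - k + g * k) by ring,
    neg_one_zpow_add_two_mul]
  congr 4 <;> push_cast <;> ring

theorem statement3_general (m : ℝ) (hm : ∃ n : ℕ, 0 < n ∧ m = (n : ℝ) / 2)
    (τ : ℂ) (hτ : 0 < τ.im) (z₁ z₂ z₃ : ℂ)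
    (h₁ : ∀ a b : ℤ, z₁ ≠ (a : ℂ) * τ + (b : ℂ))
    (h₂ : ∀ a b : ℤ, z₂ ≠ (a : ℂ) * τ + (b : ℂ))
    (h₃ : ∀ a b : ℤ, z₃ ≠ (a : ℂ) * τ + (b : ℂ))
    (h₅ : ∀ j a b : ℤ, z₁ - z₂ - z₃ + 2 * (j : ℂ) * τ ≠ (a : ℂ) * τ + (b : ℂ)) :
    (∑' j : ℤ, (-1 : ℂ) ^ j * qpow τ ((m + 1) * (j : ℝ) ^ 2) *
        e (-(j : ℂ) * (z₁ - z₂) + (j : ℂ) * (m : ℂ) * (z₁ - z₃)) *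
        Phi (-1) m 0 τ z₁ (-z₃ + 2 * (j : ℂ) * τ) 0)
    - (∑' j : ℤ, (-1 : ℂ) ^ j * qpow τ ((m + 1) * (j : ℝ) ^ 2) *
        e ((j : ℂ) * (z₁ - z₂) + (j : ℂ) * (m : ℂ) * (z₁ - z₃)) *
        Phi (-1) m 0 τ z₂ (z₁ - z₂ - z₃ + 2 * (j : ℂ) * τ) 0)
    = (∑' j : ℤ, (-1 : ℂ) ^ j * qpow τ ((m + 1) * (j : ℝ) ^ 2) *
        e ((j : ℂ) * (z₁ - z₂) - (j : ℂ) * (m : ℂ) * (z₁ - z₃)) *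
        Phi 1 1 0 τ z₁ (-z₂ + 2 * (j : ℂ) * τ) 0)
    - (∑' j : ℤ, (-1 : ℂ) ^ j * qpow τ ((m + 1) * (j : ℝ) ^ 2) *
        e ((j : ℂ) * (z₁ - z₂) + (j : ℂ) * (m : ℂ) * (z₁ - z₃)) *
        Phi 1 1 0 τ z₃ (z₁ - z₂ - z₃ + 2 * (j : ℂ) * τ) 0) := by
  have hm₀ : 0 < m := by
    obtain ⟨n, hn, rfl⟩ := hm
    positivity
  have h₂' : ∀ a b : ℤ, -(-z₂) ≠ a * τ + b := by simpa using h₂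
  have h₃' : ∀ a b : ℤ, -(-z₃) ≠ a * τ + b := by simpa using h₃
  have h₅' : ∀ a b : ℤ, -(z₁ - z₂ - z₃) ≠ a * τ + b := fun a b h =>
    h₅ 0 (-a) (-b) (by push_cast; linear_combination -h)
  rw [tsum_mul_Phi_eq_tsum_appellTerm_sub (g := 1) (u := m * (z₁ - z₃) - (z₁ - z₂)) hτ hm₀
      (by linarith) (by norm_num) h₁ h₃' fun j => by ring,
    tsum_mul_Phi_eq_tsum_appellTerm_sub (g := 1) (u := m * (z₁ - z₃) + (z₁ - z₂)) hτ hm₀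
      (by linarith) (by norm_num) h₂ h₅' fun j => by ring,
    tsum_mul_Phi_eq_tsum_appellTerm_sub (g := 0) (u := (z₁ - z₂) - m * (z₁ - z₃)) hτ one_pos
      (by linarith) (by norm_num) h₁ h₂' fun j => by ring,
    tsum_mul_Phi_eq_tsum_appellTerm_sub (g := 0) (u := m * (z₁ - z₃) + (z₁ - z₂)) hτ one_pos
      (by linarith) (by norm_num) h₃ h₅' fun j => by ring]
  simp only [tsum_appellTerm_shear τ (m + 1) m m 1]
  -- the sheared left-hand series are the right-hand ones, paired differently
  rw [sub_sub_sub_comm (∑' p, appellTerm τ (m + 1) 1 1 0 _ _ _ p)]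
  congr 2 <;> congr! 3 <;> push_cast <;> ring

theorem statement3 (m : ℝ) (hm : ∃ n : ℕ, 0 < n ∧ m = (n : ℝ) / 2)
    (τ : ℂ) (hτ : 0 < τ.im) (z₁ z₂ z₃ : ℂ)
    (h₁ : ∀ a b : ℤ, z₁ ≠ (a : ℂ) * τ + (b : ℂ))
    (h₂ : ∀ a b : ℤ, z₂ ≠ (a : ℂ) * τ + (b : ℂ))
    (h₃ : ∀ a b : ℤ, z₃ ≠ (a : ℂ) * τ + (b : ℂ))
    (h₄ : ∀ j a b : ℤ, -z₃ + 2 * (j : ℂ) * τ ≠ (a : ℂ) * τ + (b : ℂ))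
    (h₅ : ∀ j a b : ℤ, z₁ - z₂ - z₃ + 2 * (j : ℂ) * τ ≠ (a : ℂ) * τ + (b : ℂ)) :
    (∑' j : ℤ, (-1 : ℂ) ^ j * qpow τ ((m + 1) * (j : ℝ) ^ 2) *
        e (-(j : ℂ) * (z₁ - z₂) + (j : ℂ) * (m : ℂ) * (z₁ - z₃)) *
        Phi (-1) m 0 τ z₁ (-z₃ + 2 * (j : ℂ) * τ) 0)
    - (∑' j : ℤ, (-1 : ℂ) ^ j * qpow τ ((m + 1) * (j : ℝ) ^ 2) *
        e ((j : ℂ) * (z₁ - z₂) + (j : ℂ) * (m : ℂ) * (z₁ - z₃)) *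
        Phi (-1) m 0 τ z₂ (z₁ - z₂ - z₃ + 2 * (j : ℂ) * τ) 0)
    = (∑' j : ℤ, (-1 : ℂ) ^ j * qpow τ ((m + 1) * (j : ℝ) ^ 2) *
        e ((j : ℂ) * (z₁ - z₂) - (j : ℂ) * (m : ℂ) * (z₁ - z₃)) *
        Phi 1 1 0 τ z₁ (-z₂ + 2 * (j : ℂ) * τ) 0)
    - (∑' j : ℤ, (-1 : ℂ) ^ j * qpow τ ((m + 1) * (j : ℝ) ^ 2) *
        e ((j : ℂ) * (z₁ - z₂) + (j : ℂ) * (m : ℂ) * (z₁ - z₃)) *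
        Phi 1 1 0 τ z₃ (z₁ - z₂ - z₃ + 2 * (j : ℂ) * τ) 0) :=
  statement3_general m hm τ hτ z₁ z₂ z₃ h₁ h₂ h₃ h₅

end Mock
end
end
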